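/- arXiv:math/0306204 — 3 statements merged into one kernel-verified Lean document; each statement's English description precedes it below -/
import Mathlib

section
/- Let Γ be a group acting by homeomorphisms on a Hausdorff topological space Ω. Assume that (i) there exist two elements of Γ whose actions on Ω are transverse hyperbolic homeomorphisms, and (ii) for every finite subset F of Γ ∖ {e} there exists a point t ∈ Ω which is a fixed point of some element of Γ acting as a hyperbolic homeomorphism, such that f·t ≠ t for all f ∈ F. Then Γ is a Powers group. -/
/-- A homeomorphism `γ` of a topological space is *hyperbolic* with source `s` and range `r`
if `s ≠ r` are fixed points of `γ` and `γ` exhibits north-south dynamics: for all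
neighbourhoods `S` of `s` and `R` of `r` there is `n₀` with `γ^n (Ω ∖ S) ⊆ R` and
`γ^{-n} (Ω ∖ R) ⊆ S` for all `n ≥ n₀`. -/
def IsHyperbolicHomeo {Ω : Type*} [TopologicalSpace Ω] (γ : Ω ≃ₜ Ω) (s r : Ω) : Prop :=
  s ≠ r ∧ γ s = s ∧ γ r = r ∧
    ∀ S ∈ nhds s, ∀ R ∈ nhds r, ∃ n₀ : ℕ, ∀ n ≥ n₀,
      (⇑γ)^[n] '' Sᶜ ⊆ R ∧ (⇑γ.symm)^[n] '' Rᶜ ⊆ S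

/-- A group `Γ` is a *Powers group* if for every finite subset `F ⊆ Γ \ {e}` and every `N ≥ 1`
there are a partition `Γ = C ⊔ D` and elements `γ₁, …, γ_N` of `Γ` with `fC ∩ C = ∅` for all
`f ∈ F` and `γ_j D ∩ γ_k D = ∅` for `j ≠ k`. -/
def IsPowersGroup (Γ : Type*) [Group Γ] : Prop :=
  ∀ (F : Finset Γ), (1 : Γ) ∉ F → ∀ N : ℕ, 1 ≤ N →
    ∃ (C D : Set Γ) (g : Fin N → Γ),
      C ∪ D = Set.univ ∧ C ∩ D = ∅ ∧
      (∀ f ∈ F, (fun x => f * x) '' C ∩ C = ∅) ∧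
      (∀ j k : Fin N, j ≠ k → (fun x => g j * x) '' D ∩ (fun x => g k * x) '' D = ∅)

section Aux

variable {Γ Ω : Type*} [Group Γ] [TopologicalSpace Ω] [MulAction Γ Ω] [ContinuousConstSMul Γ Ω]

/-- Unfolded form of hyperbolicity for a group element acting on `Ω`. -/
def HypSMul (c : Γ) (s r : Ω) : Prop :=
  s ≠ r ∧ c • s = s ∧ c • r = r ∧
    ∀ S ∈ nhds s, ∀ R ∈ nhds r, ∃ n₀ : ℕ, ∀ n ≥ n₀,
      (∀ x ∉ S, c ^ n • x ∈ R) ∧ (∀ x ∉ R, (c⁻¹) ^ n • x ∈ S)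

theorem hypSMul_of_isHyperbolicHomeo {c : Γ} {s r : Ω}
    (h : IsHyperbolicHomeo (Homeomorph.smul c : Ω ≃ₜ Ω) s r) : HypSMul c s r := by
  obtain ⟨hne, hs, hr, hdyn⟩ := h
  refine ⟨hne, hs, hr, fun S hS R hR => ?_⟩
  obtain ⟨n₀, hn₀⟩ := hdyn S hS R hR
  refine ⟨n₀, fun n hn => ?_⟩
  obtain ⟨h1, h2⟩ := hn₀ n hn
  have e1 : ∀ x : Ω, (⇑(Homeomorph.smul c : Ω ≃ₜ Ω))^[n] x = c ^ n • x := by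
    have : ⇑(Homeomorph.smul c : Ω ≃ₜ Ω) = (c • · : Ω → Ω) := rfl
    rw [this, smul_iterate]; intro x; rfl
  have e2 : ∀ x : Ω, (⇑(Homeomorph.smul c : Ω ≃ₜ Ω).symm)^[n] x = (c⁻¹) ^ n • x := by
    have : ⇑(Homeomorph.smul c : Ω ≃ₜ Ω).symm = (c⁻¹ • · : Ω → Ω) := rfl
    rw [this, smul_iterate]; intro x; rfl
  constructor
  · intro x hx
    have := h1 ⟨x, hx, rfl⟩
    rwa [e1 x] at this
  · intro x hx
    have := h2 ⟨x, hx, rfl⟩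
    rwa [e2 x] at this

theorem HypSMul.inv {c : Γ} {s r : Ω} (h : HypSMul c s r) : HypSMul c⁻¹ r s := by
  obtain ⟨hne, hs, hr, hdyn⟩ := h
  refine ⟨hne.symm, ?_, ?_, ?_⟩
  · rw [inv_smul_eq_iff, hr]
  · rw [inv_smul_eq_iff, hs]
  · intro S hS R hR
    obtain ⟨n₀, hn₀⟩ := hdyn R hR S hS
    refine ⟨n₀, fun n hn => ?_⟩
    obtain ⟨h1, h2⟩ := hn₀ n hn
    exact ⟨h2, by simpa using h1⟩

theorem HypSMul.pow_smul_fixed {c : Γ} {t : Ω} (h : c • t = t) (n : ℕ) : c ^ n • t = t := by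
  induction n with
  | zero => simp
  | succ k ih => rw [pow_succ, mul_smul, h, ih]

/-- In a T2 space, a fixed point of a hyperbolic element is its source or its range. -/
theorem HypSMul.fixed_eq [T2Space Ω] {c : Γ} {s r t : Ω} (h : HypSMul c s r)
    (ht : c • t = t) : t = s ∨ t = r := by
  by_contra hcon
  push_neg at hcon
  obtain ⟨hts, htr⟩ := hcon
  obtain ⟨hne, hs, hr, hdyn⟩ := h
  have hS : ({t}ᶜ : Set Ω) ∈ nhds s := compl_singleton_mem_nhds (Ne.symm hts)
  have hR : ({t}ᶜ : Set Ω) ∈ nhds r := compl_singleton_mem_nhds (Ne.symm htr)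
  obtain ⟨n₀, hn₀⟩ := hdyn _ hS _ hR
  have := (hn₀ n₀ le_rfl).1 t (by simp)
  rw [HypSMul.pow_smul_fixed ht] at this
  exact this rfl

/-- Convergence to the range for points other than the source. -/
theorem HypSMul.tendsto [T2Space Ω] {c : Γ} {s r x : Ω} (h : HypSMul c s r)
    (hx : x ≠ s) {R : Set Ω} (hR : R ∈ nhds r) : ∃ n₀ : ℕ, ∀ n ≥ n₀, c ^ n • x ∈ R := by
  obtain ⟨hne, hs, hr, hdyn⟩ := h
  have hS : ({x}ᶜ : Set Ω) ∈ nhds s := compl_singleton_mem_nhds (Ne.symm hx)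
  obtain ⟨n₀, hn₀⟩ := hdyn _ hS _ hR
  exact ⟨n₀, fun n hn => (hn₀ n hn).1 x (by simp)⟩

theorem HypSMul.conj {c : Γ} {s r : Ω} (h : HypSMul c s r) (g : Γ) :
    HypSMul (g * c * g⁻¹) (g • s) (g • r) := by
  obtain ⟨hne, hs, hr, hdyn⟩ := h
  refine ⟨fun hq => hne (smul_left_cancel g hq), ?_, ?_, ?_⟩
  · rw [mul_smul, mul_smul, inv_smul_smul, hs]
  · rw [mul_smul, mul_smul, inv_smul_smul, hr]
  · intro S' hS' R' hR'
    have hS : (fun x : Ω => g • x) ⁻¹' S' ∈ nhds s := by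
      apply (continuous_const_smul g).continuousAt.preimage_mem_nhds
      simpa using hS'
    have hR : (fun x : Ω => g • x) ⁻¹' R' ∈ nhds r := by
      apply (continuous_const_smul g).continuousAt.preimage_mem_nhds
      simpa using hR'
    obtain ⟨n₀, hn₀⟩ := hdyn _ hS _ hR
    refine ⟨n₀, fun n hn => ?_⟩
    obtain ⟨h1, h2⟩ := hn₀ n hn
    constructor
    · intro x hx
      have hx' : g⁻¹ • x ∉ (fun x : Ω => g • x) ⁻¹' S' := by
        simp only [Set.mem_preimage, smul_inv_smul]
        exact hx
      have := h1 _ hx'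
      simp only [Set.mem_preimage] at this
      rw [conj_pow, mul_smul, mul_smul]
      exact this
    · intro x hx
      have hx' : g⁻¹ • x ∉ (fun x : Ω => g • x) ⁻¹' R' := by
        simp only [Set.mem_preimage, smul_inv_smul]
        exact hx
      have := h2 _ hx'
      simp only [Set.mem_preimage] at this
      rw [mul_inv_rev, mul_inv_rev, inv_inv, ← mul_assoc, conj_pow, mul_smul, mul_smul]
      exact this

end Aux

theorem powers_criterion {Γ Ω : Type*} [Group Γ] [TopologicalSpace Ω] [T2Space Ω]
    [MulAction Γ Ω] [ContinuousConstSMul Γ Ω]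
    (h1 : ∃ (γ γ' : Γ) (s r s' r' : Ω),
      IsHyperbolicHomeo (Homeomorph.smul γ : Ω ≃ₜ Ω) s r ∧
      IsHyperbolicHomeo (Homeomorph.smul γ' : Ω ≃ₜ Ω) s' r' ∧
      ({s, r} ∩ {s', r'} : Set Ω) = ∅)
    (h2 : ∀ F : Finset Γ, (1 : Γ) ∉ F →
      ∃ t : Ω,
        (∃ (γ : Γ) (s r : Ω), IsHyperbolicHomeo (Homeomorph.smul γ : Ω ≃ₜ Ω) s r ∧ γ • t = t) ∧
        ∀ f ∈ F, f • t ≠ t) :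
    IsPowersGroup Γ := by
  intro F hF N hN
  obtain ⟨t, ⟨γ₀, s₀, r₀, hhyp₀, hfix⟩, hft⟩ := h2 F hF
  have hyp₀ : HypSMul γ₀ s₀ r₀ := hypSMul_of_isHyperbolicHomeo hhyp₀
  -- get `a` hyperbolic with range `t` and source `sa`
  obtain ⟨a, sa, hypa⟩ : ∃ (a : Γ) (sa : Ω), HypSMul a sa t := by
    rcases hyp₀.fixed_eq hfix with h | h
    · exact ⟨γ₀⁻¹, r₀, h ▸ hyp₀.inv⟩
    · exact ⟨γ₀, s₀, h ▸ hyp₀⟩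
  -- get `b` hyperbolic with fixed points `p, q`, both different from `sa`
  obtain ⟨b, p, q, hypb, hpsa, hqsa⟩ :
      ∃ (b : Γ) (p q : Ω), HypSMul b p q ∧ p ≠ sa ∧ q ≠ sa := by
    obtain ⟨γ, γ', s, r, s', r', hγ, hγ', hdisj⟩ := h1
    by_cases hc : s ≠ sa ∧ r ≠ sa
    · exact ⟨γ, s, r, hypSMul_of_isHyperbolicHomeo hγ, hc.1, hc.2⟩
    · push_neg at hc
      have hsa : sa ∈ ({s, r} : Set Ω) := by
        by_cases hs : s = sa
        · exact Or.inl hs.symm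
        · exact Or.inr (hc hs).symm
      refine ⟨γ', s', r', hypSMul_of_isHyperbolicHomeo hγ', fun h => ?_, fun h => ?_⟩
      · have : sa ∈ ({s, r} ∩ {s', r'} : Set Ω) := ⟨hsa, Or.inl h.symm⟩
        rw [hdisj] at this; exact this
      · have : sa ∈ ({s, r} ∩ {s', r'} : Set Ω) := ⟨hsa, Or.inr h.symm⟩
        rw [hdisj] at this; exact this
  -- construct an open neighbourhood U of t with f • U ∩ U = ∅ for all f ∈ F
  obtain ⟨U, hUopen, htU, hU⟩ :
      ∃ U : Set Ω, IsOpen U ∧ t ∈ U ∧ ∀ f ∈ F, ∀ u ∈ U, ∀ u' ∈ U, f • u ≠ u' := by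
    have hsep : ∀ i : {f : Γ // f ∈ F}, ∃ V W : Set Ω,
        IsOpen V ∧ IsOpen W ∧ (i : Γ) • t ∈ V ∧ t ∈ W ∧ Disjoint V W :=
      fun i => t2_separation (hft i.1 i.2)
    choose V W hVopen hWopen hVmem hWmem hVW using hsep
    refine ⟨⋂ i : {f : Γ // f ∈ F}, (W i ∩ (fun x : Ω => (i : Γ) • x) ⁻¹' V i), ?_, ?_, ?_⟩
    · exact isOpen_iInter_of_finite fun i =>
        (hWopen i).inter ((hVopen i).preimage (continuous_const_smul _))
    · exact Set.mem_iInter.2 fun i => ⟨hWmem i, hVmem i⟩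
    · intro f hf u hu u' hu' heq
      have hu1 := Set.mem_iInter.1 hu ⟨f, hf⟩
      have hu2 := Set.mem_iInter.1 hu' ⟨f, hf⟩
      have hfu : f • u ∈ V ⟨f, hf⟩ := hu1.2
      have : f • u ∈ W ⟨f, hf⟩ := heq ▸ hu2.1
      exact Set.disjoint_left.1 (hVW ⟨f, hf⟩) hfu this
  -- push the fixed points of b into U using powers of a
  have hUnhds : U ∈ nhds t := hUopen.mem_nhds htU
  obtain ⟨m₁, hm₁⟩ := hypa.tendsto hpsa hUnhds
  obtain ⟨m₂, hm₂⟩ := hypa.tendsto hqsa hUnhds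
  set m := max m₁ m₂ with hm
  have hPU : a ^ m • p ∈ U := hm₁ m (le_max_left _ _)
  have hQU : a ^ m • q ∈ U := hm₂ m (le_max_right _ _)
  -- the conjugate c has both fixed points in U
  set c : Γ := a ^ m * b * (a ^ m)⁻¹ with hc
  have hypc : HypSMul c (a ^ m • p) (a ^ m • q) := hypb.conj (a ^ m)
  obtain ⟨n₀, hn₀⟩ := hypc.2.2.2 U (hUopen.mem_nhds hPU) U (hUopen.mem_nhds hQU)
  set M := n₀ + 1 with hM
  -- key property: positive powers c^(k*M) with k ≥ 1 map Ω \ U into U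
  have hkey : ∀ k : ℕ, 1 ≤ k → ∀ x : Ω, x ∉ U → c ^ (k * M) • x ∈ U := by
    intro k hk x hx
    have hge : n₀ ≤ k * M := le_trans (Nat.le_succ n₀) (Nat.le_mul_of_pos_left M hk)
    exact (hn₀ (k * M) hge).1 x hx
  -- define the partition
  refine ⟨{g : Γ | g • t ∈ U}, {g : Γ | g • t ∈ U}ᶜ,
    fun j => c ^ (((j : ℕ) + 1) * M), ?_, ?_, ?_, ?_⟩
  · exact Set.union_compl_self _
  · exact Set.inter_compl_self _
  · intro f hf
    ext z
    simp only [Set.mem_inter_iff, Set.mem_image, Set.mem_setOf_eq, Set.mem_empty_iff_false,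
      iff_false, not_and]
    rintro ⟨g, hg, rfl⟩ hz
    rw [mul_smul] at hz
    exact hU f hf (g • t) hg (f • (g • t)) hz rfl
  · intro j k hjk
    ext z
    simp only [Set.mem_inter_iff, Set.mem_image, Set.mem_compl_iff, Set.mem_setOf_eq,
      Set.mem_empty_iff_false, iff_false, not_and]
    rintro ⟨u, hu, rfl⟩ ⟨v, hv, heq⟩
    have heqt : c ^ (((k : ℕ) + 1) * M) • (v • t) = c ^ (((j : ℕ) + 1) * M) • (u • t) := by
      have := congrArg (fun z : Γ => z • t) heq
      simpa only [mul_smul] using this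
    have main : ∀ jv kv : ℕ, jv < kv → ∀ x y : Ω, x ∉ U → y ∉ U →
        c ^ ((kv + 1) * M) • y ≠ c ^ ((jv + 1) * M) • x := by
      intro jv kv hlt x y hx hy heq2
      have hsplit : kv + 1 = (jv + 1) + (kv - jv) := by omega
      rw [hsplit, add_mul, pow_add, mul_smul] at heq2
      have heq3 : c ^ ((kv - jv) * M) • y = x := smul_left_cancel _ heq2
      exact hx (heq3 ▸ hkey (kv - jv) (by omega) y hy)
    rcases lt_or_gt_of_ne (fun h : (j : ℕ) = (k : ℕ) => hjk (Fin.ext h)) with hlt | hlt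
    · exact main (j : ℕ) (k : ℕ) hlt (u • t) (v • t) hu hv heqt
    · exact main (k : ℕ) (j : ℕ) hlt (v • t) (u • t) hv hu heqt.symm
end

section
/- Let Γ be a group acting by homeomorphisms on a Hausdorff topological space Ω, and let γ', γ'' ∈ Γ act as transverse hyperbolic homeomorphisms of Ω. Then for every integer N ≥ 1 there exist integers k_1, …, k_N such that the elements γ''^{-k_1}γ'γ''^{k_1}, …, γ''^{-k_N}γ'γ''^{k_N} act as pairwise transverse hyperbolic homeomorphisms of Ω. -/
section Aux

variable {Γ Ω : Type*} [Group Γ] [TopologicalSpace Ω] [MulAction Γ Ω]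
  [ContinuousConstSMul Γ Ω]

/-- Normal form of `IsHyperbolicHomeo` for smul homeomorphisms, phrased purely with `•`. -/
lemma isHyperbolicHomeo_smul_iff (g : Γ) (s r : Ω) :
    IsHyperbolicHomeo (Homeomorph.smul g : Ω ≃ₜ Ω) s r ↔
      s ≠ r ∧ g • s = s ∧ g • r = r ∧
      ∀ S ∈ nhds s, ∀ R ∈ nhds r, ∃ n₀ : ℕ, ∀ n ≥ n₀,
        (∀ x, x ∉ S → g ^ n • x ∈ R) ∧ ∀ x, x ∉ R → g⁻¹ ^ n • x ∈ S := by
  have h1 : ⇑(Homeomorph.smul g : Ω ≃ₜ Ω) = fun x => g • x := rfl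
  have h2 : ⇑(Homeomorph.smul g : Ω ≃ₜ Ω).symm = fun x => g⁻¹ • x := rfl
  simp only [IsHyperbolicHomeo, h1, h2, smul_iterate, Set.subset_def, Set.forall_mem_image,
    Set.mem_compl_iff]

/-- The inverse of a hyperbolic smul homeomorphism is hyperbolic with poles swapped. -/
lemma isHyperbolicHomeo_smul_inv {g : Γ} {s r : Ω}
    (h : IsHyperbolicHomeo (Homeomorph.smul g : Ω ≃ₜ Ω) s r) :
    IsHyperbolicHomeo (Homeomorph.smul g⁻¹ : Ω ≃ₜ Ω) r s := by
  rw [isHyperbolicHomeo_smul_iff] at h ⊢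
  obtain ⟨hne, hs, hr, hdyn⟩ := h
  refine ⟨hne.symm, ?_, ?_, ?_⟩
  · rw [inv_smul_eq_iff, hr]
  · rw [inv_smul_eq_iff, hs]
  · intro R hR S hS
    obtain ⟨n₀, hn⟩ := hdyn S hS R hR
    exact ⟨n₀, fun n hnn =>
      ⟨(hn n hnn).2, by simpa using (hn n hnn).1⟩⟩

/-- Periodic points of a hyperbolic smul homeomorphism are its poles (nat powers). -/
lemma eq_pole_of_pow_smul_fixed [T2Space Ω] {g : Γ} {s r : Ω}
    (h : IsHyperbolicHomeo (Homeomorph.smul g : Ω ≃ₜ Ω) s r)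
    {x : Ω} {n : ℕ} (hn : 1 ≤ n) (hx : g ^ n • x = x) : x = s ∨ x = r := by
  rw [isHyperbolicHomeo_smul_iff] at h
  obtain ⟨hne, hs, hr, hdyn⟩ := h
  by_contra hc
  push_neg at hc
  obtain ⟨hxs, hxr⟩ := hc
  obtain ⟨U, V, hU, hV, hxU, hsV, hUV⟩ := t2_separation hxs
  obtain ⟨U', V', hU', hV', hxU', hrV', hUV'⟩ := t2_separation hxr
  obtain ⟨n₀, hd⟩ := hdyn V (hV.mem_nhds hsV) V' (hV'.mem_nhds hrV')
  set m := n * (n₀ + 1) with hm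
  have hmn₀ : m ≥ n₀ := by
    have : 1 * (n₀ + 1) ≤ n * (n₀ + 1) := Nat.mul_le_mul_right _ hn
    omega
  have hfix : g ^ m • x = x := by
    have h1 : (fun y => g ^ n • y)^[n₀ + 1] x = x := Function.iterate_fixed hx _
    rw [smul_iterate] at h1
    rwa [hm, pow_mul]
  have hxV : x ∉ V := Set.disjoint_left.mp hUV hxU
  have hmem : g ^ m • x ∈ V' := (hd m hmn₀).1 x hxV
  rw [hfix] at hmem
  exact Set.disjoint_left.mp hUV' hxU' hmem

/-- Periodic points of a hyperbolic smul homeomorphism are its poles (nonzero int powers). -/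
lemma eq_pole_of_zpow_smul_fixed [T2Space Ω] {g : Γ} {s r : Ω}
    (h : IsHyperbolicHomeo (Homeomorph.smul g : Ω ≃ₜ Ω) s r)
    {x : Ω} {m : ℤ} (hm : m ≠ 0) (hx : g ^ m • x = x) : x = s ∨ x = r := by
  have hpos : 1 ≤ m.natAbs := Int.natAbs_pos.mpr hm
  rcases Int.natAbs_eq m with he | he
  · rw [he, zpow_natCast] at hx
    exact eq_pole_of_pow_smul_fixed h hpos hx
  · rw [he, zpow_neg, zpow_natCast, ← inv_pow] at hx
    exact (eq_pole_of_pow_smul_fixed (isHyperbolicHomeo_smul_inv h) hpos hx).symm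

/-- Conjugation of a hyperbolic smul homeomorphism. -/
lemma isHyperbolicHomeo_smul_conj {g : Γ} {s r : Ω}
    (h : IsHyperbolicHomeo (Homeomorph.smul g : Ω ≃ₜ Ω) s r) (δ : Γ) :
    IsHyperbolicHomeo (Homeomorph.smul (δ * g * δ⁻¹) : Ω ≃ₜ Ω) (δ • s) (δ • r) := by
  rw [isHyperbolicHomeo_smul_iff] at h ⊢
  obtain ⟨hne, hs, hr, hdyn⟩ := h
  refine ⟨fun e => hne (MulAction.injective δ e), by simp [mul_smul, hs],
    by simp [mul_smul, hr], ?_⟩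
  intro S hS R hR
  have hS₀ : (fun y => δ • y) ⁻¹' S ∈ nhds s :=
    (continuous_const_smul δ).continuousAt.preimage_mem_nhds hS
  have hR₀ : (fun y => δ • y) ⁻¹' R ∈ nhds r :=
    (continuous_const_smul δ).continuousAt.preimage_mem_nhds hR
  obtain ⟨n₀, hd⟩ := hdyn _ hS₀ _ hR₀
  refine ⟨n₀, fun n hn => ⟨fun x hx => ?_, fun x hx => ?_⟩⟩
  · have h2 : δ⁻¹ • x ∉ (fun y => δ • y) ⁻¹' S := by
      simpa [Set.mem_preimage, smul_inv_smul] using hx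
    have h3 := (hd n hn).1 _ h2
    rw [conj_pow]
    simpa [mul_smul] using h3
  · have h2 : δ⁻¹ • x ∉ (fun y => δ • y) ⁻¹' R := by
      simpa [Set.mem_preimage, smul_inv_smul] using hx
    have h3 := (hd n hn).2 _ h2
    rw [show (δ * g * δ⁻¹)⁻¹ = δ * g⁻¹ * δ⁻¹ by group, conj_pow]
    simpa [mul_smul] using h3

end Aux

theorem exists_pairwise_transverse_conjugates {Γ Ω : Type*} [Group Γ] [TopologicalSpace Ω]
    [T2Space Ω] [MulAction Γ Ω] [ContinuousConstSMul Γ Ω]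
    (γ' γ'' : Γ) (s' r' s'' r'' : Ω)
    (h' : IsHyperbolicHomeo (Homeomorph.smul γ' : Ω ≃ₜ Ω) s' r')
    (h'' : IsHyperbolicHomeo (Homeomorph.smul γ'' : Ω ≃ₜ Ω) s'' r'')
    (htrans : ({s', r'} ∩ {s'', r''} : Set Ω) = ∅) :
    ∀ N : ℕ, 1 ≤ N → ∃ (k : Fin N → ℤ) (s r : Fin N → Ω),
      (∀ j : Fin N,
        IsHyperbolicHomeo (Homeomorph.smul (γ'' ^ (-(k j)) * γ' * γ'' ^ (k j)) : Ω ≃ₜ Ω)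
          (s j) (r j)) ∧
      ∀ j l : Fin N, j ≠ l → ({s j, r j} ∩ {s l, r l} : Set Ω) = ∅ := by
  intro N _
  rw [Set.eq_empty_iff_forall_notMem] at htrans
  have hss : s' ≠ s'' := fun e => htrans s' ⟨by simp, by simp [e]⟩
  have hsr : s' ≠ r'' := fun e => htrans s' ⟨by simp, by simp [e]⟩
  have hrs : r' ≠ s'' := fun e => htrans r' ⟨by simp, by simp [e]⟩
  have hrr : r' ≠ r'' := fun e => htrans r' ⟨by simp, by simp [e]⟩
  -- s' is never periodic for γ''
  have key_s : ∀ d : ℤ, γ'' ^ d • s' = s' → d = 0 := by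
    intro d hd
    by_contra h0
    rcases eq_pole_of_zpow_smul_fixed h'' h0 hd with e | e
    · exact hss e
    · exact hsr e
  have key_r : ∀ d : ℤ, γ'' ^ d • r' = r' → d = 0 := by
    intro d hd
    by_contra h0
    rcases eq_pole_of_zpow_smul_fixed h'' h0 hd with e | e
    · exact hrs e
    · exact hrr e
  -- transport of equalities between translates
  have aux : ∀ (a b : ℤ) (x y : Ω), γ'' ^ a • x = γ'' ^ b • y → γ'' ^ (a - b) • x = y := by
    intro a b x y hxy
    have h1 : γ'' ^ (a - b) • x = γ'' ^ (-b) • γ'' ^ a • x := by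
      rw [smul_smul, ← zpow_add, neg_add_eq_sub]
    rw [h1, hxy, zpow_neg]
    exact inv_smul_smul _ _
  -- bound on the exceptional exponent sending s' to r'
  obtain ⟨M, hM⟩ : ∃ M : ℕ, ∀ m : ℤ, γ'' ^ m • s' = r' → m.natAbs ≤ M := by
    by_cases hP : ∃ m : ℤ, γ'' ^ m • s' = r'
    · obtain ⟨m₀, hm₀⟩ := hP
      refine ⟨m₀.natAbs, fun m hm => le_of_eq (congrArg Int.natAbs ?_)⟩
      have : γ'' ^ (m - m₀) • s' = s' := by
        have := aux m m₀ s' s' (by rw [hm, hm₀])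
        simpa using this
      have := key_s _ this
      omega
    · exact ⟨0, fun m hm => absurd ⟨m, hm⟩ hP⟩
  refine ⟨fun j => (j : ℤ) * (M + 1), fun j => γ'' ^ (-((j : ℤ) * (M + 1))) • s',
    fun j => γ'' ^ (-((j : ℤ) * (M + 1))) • r', fun j => ?_, ?_⟩
  · have hc := isHyperbolicHomeo_smul_conj h' (γ'' ^ (-((j : ℤ) * (M + 1))))
    rwa [show (γ'' ^ (-((j : ℤ) * (M + 1))))⁻¹ = γ'' ^ ((j : ℤ) * (M + 1)) by
      rw [← zpow_neg, neg_neg]] at hc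
  · intro j l hjl
    rw [Set.eq_empty_iff_forall_notMem]
    rintro x ⟨hx1, hx2⟩
    set d : ℤ := (l : ℤ) * (M + 1) - (j : ℤ) * (M + 1) with hd
    have hcne : ((l : ℤ) - (j : ℤ)) ≠ 0 := by
      have : (j : ℤ) ≠ (l : ℤ) := by
        exact_mod_cast fun e => hjl (Fin.val_injective (by exact_mod_cast e))
      omega
    have hdabs : M + 1 ≤ d.natAbs := by
      have h1 : d = ((l : ℤ) - (j : ℤ)) * (M + 1) := by rw [hd]; ring
      have h2 : d.natAbs = ((l : ℤ) - (j : ℤ)).natAbs * (M + 1 : ℤ).natAbs := by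
        rw [h1, Int.natAbs_mul]
      have h3 : 1 ≤ ((l : ℤ) - (j : ℤ)).natAbs := Int.natAbs_pos.mpr hcne
      have h4 : ((M : ℤ) + 1).natAbs = M + 1 := by
        simpa using Int.natAbs_natCast (M + 1)
      calc M + 1 = 1 * (M + 1) := (one_mul _).symm
        _ ≤ ((l : ℤ) - (j : ℤ)).natAbs * (M + 1) := Nat.mul_le_mul_right _ h3
        _ = d.natAbs := by rw [h2, h4]
    have hdne : d ≠ 0 := fun e => by simp [e] at hdabs
    -- the four cases
    have step : ∀ a b : Ω, γ'' ^ (-((j : ℤ) * (M + 1))) • a = γ'' ^ (-((l : ℤ) * (M + 1))) • b →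
        γ'' ^ d • a = b := by
      intro a b hab
      have := aux _ _ _ _ hab
      rwa [show -((j : ℤ) * (M + 1)) - -((l : ℤ) * (M + 1)) = d by rw [hd]; ring] at this
    simp only [Set.mem_insert_iff, Set.mem_singleton_iff] at hx1 hx2
    rcases hx1 with e1 | e1 <;> rcases hx2 with e2 | e2
    · exact hdne (key_s d (step s' s' (e1.symm.trans e2)))
    · have := hM d (step s' r' (e1.symm.trans e2))
      omega
    · have h5 : γ'' ^ d • r' = s' := step r' s' (e1.symm.trans e2)
      have h6 : γ'' ^ (-d) • s' = r' := by
        rw [← h5, smul_smul, ← zpow_add]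
        simp
      have := hM _ h6
      rw [Int.natAbs_neg] at this
      omega
    · exact hdne (key_r d (step r' r' (e1.symm.trans e2)))
end

section
/- Let Γ be a Powers group and let X be an element of the reduced group C*-algebra C*_λ(Γ) with canonical trace zero, i.e. ⟨X δ_e, δ_e⟩ = 0. Then for every δ > 0 there exist an integer N ≥ 1 and elements γ_1, …, γ_N ∈ Γ such that ‖(1/N) Σ_{j=1}^N λ_Γ(γ_j) X λ_Γ(γ_j)⁻¹‖ < δ. -/
open scoped ENNReal

noncomputable section

set_option maxHeartbeats 1000000

abbrev l2 (Γ : Type*) := lp (fun _ : Γ => ℂ) 2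

def lamAux {Γ : Type*} [Group Γ] (γ : Γ) (f : l2 Γ) : l2 Γ :=
  ⟨fun x => f (γ⁻¹ * x), by
    apply memℓp_gen
    have h1 : Summable fun i : Γ => ‖f i‖ ^ (2 : ℝ≥0∞).toReal :=
      (lp.memℓp f).summable (by norm_num)
    exact (Equiv.mulLeft γ⁻¹).summable_iff.mpr h1⟩

theorem lamAux_apply {Γ : Type*} [Group Γ] (γ : Γ) (f : l2 Γ) (x : Γ) :
    lamAux γ f x = f (γ⁻¹ * x) := rfl

theorem lamAux_norm {Γ : Type*} [Group Γ] (γ : Γ) (f : l2 Γ) : ‖lamAux γ f‖ = ‖f‖ := by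
  rw [lp.norm_eq_tsum_rpow (by norm_num) (lamAux γ f), lp.norm_eq_tsum_rpow (by norm_num) f]
  congr 1
  have h := (Equiv.mulLeft γ⁻¹).tsum_eq (fun i : Γ => ‖f i‖ ^ (2 : ℝ≥0∞).toReal)
  exact h

def lam (Γ : Type*) [Group Γ] (γ : Γ) : l2 Γ →L[ℂ] l2 Γ :=
  LinearMap.mkContinuous
    { toFun := lamAux γ
      map_add' := fun f g => lp.ext rfl
      map_smul' := fun c f => lp.ext rfl }
    1 (fun f => by rw [one_mul]; exact le_of_eq (lamAux_norm γ f))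

def Cred (Γ : Type*) [Group Γ] : Set (l2 Γ →L[ℂ] l2 Γ) :=
  closure (Submodule.span ℂ (Set.range (lam Γ)) : Set (l2 Γ →L[ℂ] l2 Γ))

def deltaE (Γ : Type*) [Group Γ] : l2 Γ :=
  letI := Classical.decEq Γ
  lp.single 2 (1 : Γ) (1 : ℂ)

/-!
Approximate `X` by a finite combination `∑ c_γ λ(γ)`; since `X` has trace zero, the coefficient
`c_1` is at most the approximation error and can be dropped. Conjugation by unitaries is
contractive, so it remains to make the average of the conjugates of `λ(f)`, `f ≠ 1`, small.
For a Powers partition `Γ = C ⊔ D` and `ξ ∈ ℓ²(Γ)` write `ξ = ξ|_{g_j C} + ξ|_{g_j D}`. The vectors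
`λ(g_j f g_j⁻¹) ξ|_{g_j C}` are supported in `g_j f C ⊆ g_j D`, hence pairwise orthogonal, and the
`ξ|_{g_j D}` have squared norms summing to at most `‖ξ‖²`. Either way the `N` terms add up to norm
at most `√N ‖ξ‖`, so the average of the conjugates of `λ(f)` has norm at most `2 / √N`.
-/

open scoped Pointwise
open Function Filter Topology

section InnerProductSpace

variable {𝕜 E ι : Type*} [RCLike 𝕜] [NormedAddCommGroup E] [InnerProductSpace 𝕜 E] [Fintype ι]

theorem norm_sum_sq_eq_sum_norm_sq_of_pairwise_inner_eq_zero {u : ι → E}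
    (hu : Pairwise fun i j => inner 𝕜 (u i) (u j) = 0) :
    ‖∑ i, u i‖ ^ 2 = ∑ i, ‖u i‖ ^ 2 := by
  have h : inner 𝕜 (∑ i, u i) (∑ i, u i) = ∑ i, inner 𝕜 (u i) (u i) := by
    simp only [sum_inner, inner_sum]
    refine Finset.sum_congr rfl fun i _ => Finset.sum_eq_single i (fun j _ hji => hu hji) ?_
    simp
  have := congrArg RCLike.re h
  simpa only [map_sum, inner_self_eq_norm_sq] using this

theorem norm_sum_le_sqrt_card_mul_of_pairwise_inner_eq_zero {u : ι → E} {r : ℝ}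
    (hu : Pairwise fun i j => inner 𝕜 (u i) (u j) = 0) (hr : ∀ i, ‖u i‖ ≤ r) :
    ‖∑ i, u i‖ ≤ √(Fintype.card ι) * r := by
  rcases isEmpty_or_nonempty ι with hι | ⟨⟨i₀⟩⟩
  · simp
  have hr₀ : 0 ≤ r := (norm_nonneg _).trans (hr i₀)
  rw [← pow_le_pow_iff_left₀ (norm_nonneg _) (by positivity) two_ne_zero, mul_pow,
    Real.sq_sqrt (Nat.cast_nonneg _), norm_sum_sq_eq_sum_norm_sq_of_pairwise_inner_eq_zero hu]
  calc ∑ i, ‖u i‖ ^ 2 ≤ ∑ _i : ι, r ^ 2 := by gcongr with i; exact hr i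
    _ = Fintype.card ι * r ^ 2 := by simp

end InnerProductSpace

theorem norm_sum_le_sqrt_card_mul_of_sum_sq_le {E ι : Type*} [SeminormedAddCommGroup E]
    [Fintype ι] {u : ι → E} {r : ℝ} (hr : 0 ≤ r) (h : ∑ i, ‖u i‖ ^ 2 ≤ r ^ 2) :
    ‖∑ i, u i‖ ≤ √(Fintype.card ι) * r := by
  refine (norm_sum_le _ _).trans ?_
  rw [← pow_le_pow_iff_left₀ (by positivity) (by positivity) two_ne_zero, mul_pow,
    Real.sq_sqrt (Nat.cast_nonneg _)]
  calc (∑ i, ‖u i‖) ^ 2 ≤ Fintype.card ι * ∑ i, ‖u i‖ ^ 2 := sq_sum_le_card_mul_sum_sq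
    _ ≤ Fintype.card ι * r ^ 2 := by gcongr

namespace l2

variable {α : Type*}

def restrict (S : Set α) (ξ : l2 α) : l2 α :=
  ⟨S.indicator ξ, (lp.memℓp ξ).mono' fun _ => norm_indicator_le_norm_self _ _⟩

@[simp]
theorem restrict_apply (S : Set α) (ξ : l2 α) (x : α) : restrict S ξ x = S.indicator ξ x := rfl

theorem norm_restrict_le (S : Set α) (ξ : l2 α) : ‖restrict S ξ‖ ≤ ‖ξ‖ :=
  lp.norm_mono two_ne_zero fun _ => norm_indicator_le_norm_self _ _

theorem restrict_add_restrict_compl (S : Set α) (ξ : l2 α) :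
    restrict S ξ + restrict Sᶜ ξ = ξ :=
  lp.ext (S.indicator_self_add_compl ξ)

theorem support_restrict_subset (S : Set α) (ξ : l2 α) : support (restrict S ξ) ⊆ S :=
  Set.support_indicator_subset

theorem inner_eq_zero_of_disjoint_support {ξ η : l2 α} (h : Disjoint (support ξ) (support η)) :
    inner ℂ ξ η = 0 := by
  have hpt (x : α) : inner ℂ (ξ x) (η x) = 0 := by
    by_cases hx : ξ x = 0
    · simp [hx]
    · simp [notMem_support.mp (h.notMem_of_mem_left (mem_support.mpr hx))]
  rw [lp.inner_eq_tsum, tsum_congr hpt, tsum_zero]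

theorem sum_norm_restrict_sq_le {ι : Type*} [Fintype ι] {S : ι → Set α}
    (hS : Pairwise (Disjoint on S)) (ξ : l2 α) :
    ∑ i, ‖restrict (S i) ξ‖ ^ 2 ≤ ‖ξ‖ ^ 2 := by
  have horth : Pairwise fun i j => inner ℂ (restrict (S i) ξ) (restrict (S j) ξ) = 0 :=
    fun i j hij => inner_eq_zero_of_disjoint_support <|
      (hS hij).mono (support_restrict_subset _ _) (support_restrict_subset _ _)
  rw [← norm_sum_sq_eq_sum_norm_sq_of_pairwise_inner_eq_zero horth]
  have hsum : ‖∑ i, restrict (S i) ξ‖ ≤ ‖ξ‖ := by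
    refine lp.norm_mono two_ne_zero fun x => ?_
    rw [lp.coeFn_sum, Finset.sum_apply]
    simp only [restrict_apply]
    rw [← Finset.indicator_biUnion_apply _ _ (hS.set_pairwise _)]
    exact norm_indicator_le_norm_self _ _
  gcongr

end l2

section RegularRepresentation

variable {Γ : Type*} [Group Γ]

@[simp]
theorem lam_apply (γ : Γ) (ξ : l2 Γ) (x : Γ) : lam Γ γ ξ x = ξ (γ⁻¹ * x) := rfl

theorem norm_lam_apply (γ : Γ) (ξ : l2 Γ) : ‖lam Γ γ ξ‖ = ‖ξ‖ := lamAux_norm γ ξ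

theorem norm_lam_le (γ : Γ) : ‖lam Γ γ‖ ≤ 1 :=
  LinearMap.mkContinuous_norm_le _ zero_le_one _

theorem lam_mul (a b : Γ) : lam Γ (a * b) = lam Γ a * lam Γ b := by
  ext ξ x
  simp [mul_assoc]

theorem support_lam (γ : Γ) (ξ : l2 Γ) : support (lam Γ γ ξ) = γ • support ξ := by
  ext x
  simp [Set.mem_smul_set_iff_inv_smul_mem]

theorem support_lam_conj_restrict_subset {C : Set Γ} {f : Γ} (hf : Disjoint (f • C) C) (g : Γ)
    (ξ : l2 Γ) : support (lam Γ (g * f * g⁻¹) (l2.restrict (g • C) ξ)) ⊆ g • Cᶜ := by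
  rw [support_lam]
  calc (g * f * g⁻¹) • support (l2.restrict (g • C) ξ)
      ⊆ (g * f * g⁻¹) • g • C := Set.smul_set_mono (l2.support_restrict_subset _ _)
    _ = g • f • C := by rw [smul_smul, smul_smul, inv_mul_cancel_right]
    _ ⊆ g • Cᶜ := Set.smul_set_mono hf.subset_compl_right

theorem norm_sum_lam_conj_le {ι : Type*} [Fintype ι] {C : Set Γ} {f : Γ}
    (hf : Disjoint (f • C) C) {g : ι → Γ} (hg : Pairwise (Disjoint on fun i => g i • Cᶜ)) :
    ‖∑ i, lam Γ (g i * f * (g i)⁻¹)‖ ≤ 2 * √(Fintype.card ι) := by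
  refine ContinuousLinearMap.opNorm_le_bound _ (by positivity) fun ξ => ?_
  set T := fun i => lam Γ (g i * f * (g i)⁻¹)
  have hsplit : (∑ i, T i) ξ =
      ∑ i, T i (l2.restrict (g i • C) ξ) + ∑ i, T i (l2.restrict (g i • C)ᶜ ξ) := by
    simp only [sum_apply, ← Finset.sum_add_distrib, ← map_add,
      l2.restrict_add_restrict_compl]
  have hC : ‖∑ i, T i (l2.restrict (g i • C) ξ)‖ ≤ √(Fintype.card ι) * ‖ξ‖ :=
    norm_sum_le_sqrt_card_mul_of_pairwise_inner_eq_zero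
      (fun i j hij => l2.inner_eq_zero_of_disjoint_support <| (hg hij).mono
        (support_lam_conj_restrict_subset hf _ _) (support_lam_conj_restrict_subset hf _ _))
      fun i => (norm_lam_apply _ _).trans_le (l2.norm_restrict_le _ _)
  have hD : ‖∑ i, T i (l2.restrict (g i • C)ᶜ ξ)‖ ≤ √(Fintype.card ι) * ‖ξ‖ := by
    refine norm_sum_le_sqrt_card_mul_of_sum_sq_le (norm_nonneg _) ?_
    simp only [T, norm_lam_apply, ← Set.smul_set_compl]
    exact l2.sum_norm_restrict_sq_le hg ξ
  calc ‖(∑ i, T i) ξ‖ ≤ √(Fintype.card ι) * ‖ξ‖ + √(Fintype.card ι) * ‖ξ‖ := by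
        rw [hsplit]; exact norm_add_le_of_le hC hD
    _ = 2 * √(Fintype.card ι) * ‖ξ‖ := by ring

end RegularRepresentation

section Trace

variable {Γ : Type*} [Group Γ]

theorem deltaE_apply_one : deltaE Γ 1 = 1 := by
  classical
  exact lp.single_apply_self (E := fun _ : Γ => ℂ) 2 1 1

theorem deltaE_apply_of_ne_one {x : Γ} (hx : x ≠ 1) : deltaE Γ x = 0 := by
  classical
  exact lp.single_apply_ne (E := fun _ : Γ => ℂ) 2 1 1 hx

theorem norm_deltaE : ‖deltaE Γ‖ = 1 := by
  classical
  exact (lp.norm_single (E := fun _ : Γ => ℂ) two_pos 1 1).trans norm_one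

theorem inner_deltaE_right (ξ : l2 Γ) : inner ℂ ξ (deltaE Γ) = star (ξ 1) := by
  classical
  simp [deltaE, lp.inner_single_right]

theorem norm_inner_apply_deltaE_le (T : l2 Γ →L[ℂ] l2 Γ) :
    ‖inner ℂ (T (deltaE Γ)) (deltaE Γ)‖ ≤ ‖T‖ := by
  rw [inner_deltaE_right, norm_star]
  calc ‖T (deltaE Γ) 1‖ ≤ ‖T (deltaE Γ)‖ := lp.norm_apply_le_norm two_ne_zero _ _
    _ ≤ ‖T‖ := by simpa [norm_deltaE] using T.le_opNorm (deltaE Γ)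

theorem linearCombination_lam_deltaE_apply_one (c : Γ →₀ ℂ) :
    Finsupp.linearCombination ℂ (lam Γ) c (deltaE Γ) 1 = c 1 := by
  simp only [Finsupp.linearCombination_apply, Finsupp.sum, sum_apply, lp.coeFn_sum,
    Finset.sum_apply]
  rw [Finset.sum_eq_single 1]
  · simp [deltaE_apply_one]
  · intro γ _ hγ
    simp [deltaE_apply_of_ne_one (inv_ne_one.mpr hγ)]
  · exact fun h => by simp [Finsupp.notMem_support_iff.mp h]

theorem exists_linearCombination_lam_near {X : l2 Γ →L[ℂ] l2 Γ} (hX : X ∈ Cred Γ)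
    (htr : inner ℂ (X (deltaE Γ)) (deltaE Γ) = 0) {ε : ℝ} (hε : 0 < ε) :
    ∃ c : Γ →₀ ℂ, c 1 = 0 ∧ ‖X - Finsupp.linearCombination ℂ (lam Γ) c‖ < ε := by
  obtain ⟨Y, hY, hXY⟩ := Metric.mem_closure_iff.mp hX (ε / 2) (half_pos hε)
  rw [SetLike.mem_coe, ← Finsupp.range_linearCombination] at hY
  obtain ⟨c, rfl⟩ := hY
  rw [dist_eq_norm] at hXY
  set Y := Finsupp.linearCombination ℂ (lam Γ) c
  have hc₁ : ‖c 1‖ ≤ ‖X - Y‖ := by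
    simpa [Y, inner_sub_left, htr, inner_deltaE_right, linearCombination_lam_deltaE_apply_one]
      using norm_inner_apply_deltaE_le (X - Y)
  refine ⟨c - Finsupp.single 1 (c 1), by simp, ?_⟩
  rw [map_sub, Finsupp.linearCombination_single, sub_sub_eq_add_sub, add_sub_right_comm]
  calc ‖X - Y + c 1 • lam Γ 1‖ ≤ ‖X - Y‖ + ‖c 1‖ :=
        norm_add_le_of_le le_rfl
          ((norm_smul_le _ _).trans (mul_le_of_le_one_right (norm_nonneg _) (norm_lam_le 1)))
    _ < ε := by linarith

end Trace

section ConjugationAverage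

variable {Γ : Type*} [Group Γ] {N : ℕ}

def conjAvg (g : Fin N → Γ) : (l2 Γ →L[ℂ] l2 Γ) →ₗ[ℂ] (l2 Γ →L[ℂ] l2 Γ) where
  toFun T := (N : ℂ)⁻¹ • ∑ j, lam Γ (g j) * T * lam Γ (g j)⁻¹
  map_add' S T := by simp only [mul_add, add_mul, Finset.sum_add_distrib, smul_add]
  map_smul' c T := by
    simp only [mul_smul_comm, smul_mul_assoc, ← Finset.smul_sum, smul_comm c, RingHom.id_apply]

theorem conjAvg_apply (g : Fin N → Γ) (T : l2 Γ →L[ℂ] l2 Γ) :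
    conjAvg g T = (N : ℂ)⁻¹ • ∑ j, lam Γ (g j) * T * lam Γ (g j)⁻¹ := rfl

theorem norm_conjAvg_le (g : Fin N → Γ) (T : l2 Γ →L[ℂ] l2 Γ) : ‖conjAvg g T‖ ≤ ‖T‖ := by
  rw [conjAvg_apply, norm_smul, norm_inv, Complex.norm_natCast]
  have hconj (j : Fin N) : ‖lam Γ (g j) * T * lam Γ (g j)⁻¹‖ ≤ ‖T‖ :=
    calc ‖lam Γ (g j) * T * lam Γ (g j)⁻¹‖ ≤ ‖lam Γ (g j)‖ * ‖T‖ * ‖lam Γ (g j)⁻¹‖ :=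
          norm_mul₃_le
      _ ≤ 1 * ‖T‖ * 1 := by gcongr <;> exact norm_lam_le _
      _ = ‖T‖ := by ring
  calc (N : ℝ)⁻¹ * ‖∑ j, lam Γ (g j) * T * lam Γ (g j)⁻¹‖ ≤ (N : ℝ)⁻¹ * (N * ‖T‖) := by
        gcongr
        simpa using norm_sum_le_of_le Finset.univ fun j _ => hconj j
    _ ≤ ‖T‖ := by
        rw [← mul_assoc]
        exact mul_le_of_le_one_left (norm_nonneg _) (inv_mul_le_one_of_le₀ le_rfl (by positivity))

theorem norm_conjAvg_lam_le {C : Set Γ} {f : Γ} (hf : Disjoint (f • C) C) {g : Fin N → Γ}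
    (hg : Pairwise (Disjoint on fun j => g j • Cᶜ)) : ‖conjAvg g (lam Γ f)‖ ≤ 2 / √N := by
  rw [conjAvg_apply, norm_smul, norm_inv, Complex.norm_natCast]
  simp_rw [← lam_mul]
  calc (N : ℝ)⁻¹ * ‖∑ j, lam Γ (g j * f * (g j)⁻¹)‖ ≤ (N : ℝ)⁻¹ * (2 * √N) := by
        gcongr
        simpa using norm_sum_lam_conj_le hf hg
    _ = 2 / √N := by
        rw [mul_comm, mul_assoc, ← div_eq_mul_inv, Real.sqrt_div_self', mul_one_div]

theorem norm_conjAvg_linearCombination_lam_le {C : Set Γ} (c : Γ →₀ ℂ)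
    (hC : ∀ f ∈ c.support, Disjoint (f • C) C) {g : Fin N → Γ}
    (hg : Pairwise (Disjoint on fun j => g j • Cᶜ)) :
    ‖conjAvg g (Finsupp.linearCombination ℂ (lam Γ) c)‖ ≤ (∑ γ ∈ c.support, ‖c γ‖) * (2 / √N) := by
  rw [Finsupp.linearCombination_apply, Finsupp.sum, map_sum, Finset.sum_mul]
  refine norm_sum_le_of_le _ fun γ hγ => ?_
  rw [map_smul, norm_smul]
  gcongr
  exact norm_conjAvg_lam_le (hC γ hγ) hg

end ConjugationAverage

theorem IsPowersGroup.exists_disjoint_smul {Γ : Type*} [Group Γ] (hP : IsPowersGroup Γ)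
    {F : Finset Γ} (hF : 1 ∉ F) {N : ℕ} (hN : 1 ≤ N) :
    ∃ (C : Set Γ) (g : Fin N → Γ),
      (∀ f ∈ F, Disjoint (f • C) C) ∧ Pairwise (Disjoint on fun j => g j • Cᶜ) := by
  obtain ⟨C, D, g, hU, hI, hC, hD⟩ := hP F hF N hN
  obtain rfl : Cᶜ = D :=
    IsCompl.compl_eq ⟨Set.disjoint_iff_inter_eq_empty.mpr hI, codisjoint_iff.mpr hU⟩
  exact ⟨C, g, fun f hf => Set.disjoint_iff_inter_eq_empty.mpr (hC f hf),
    fun j k hjk => Set.disjoint_iff_inter_eq_empty.mpr (hD j k hjk)⟩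

/-- If `Γ` is a Powers group and `X ∈ C*_λ(Γ)` has canonical trace zero, then averages of
conjugates of `X` by suitable group elements have arbitrarily small norm. -/
theorem powers_group_average_conjugates_small {Γ : Type*} [Group Γ]
    (hP : IsPowersGroup Γ) (X : l2 Γ →L[ℂ] l2 Γ) (hX : X ∈ Cred Γ)
    (htr : inner (𝕜 := ℂ) (X (deltaE Γ)) (deltaE Γ) = 0) :
    ∀ δ : ℝ, 0 < δ →
      ∃ N : ℕ, 1 ≤ N ∧ ∃ g : Fin N → Γ,
        ‖(N : ℂ)⁻¹ • ∑ j : Fin N, lam Γ (g j) * X * lam Γ ((g j)⁻¹)‖ < δ := by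
  intro δ hδ
  obtain ⟨c, hc₁, hXY⟩ := exists_linearCombination_lam_near hX htr (half_pos hδ)
  set Y := Finsupp.linearCombination ℂ (lam Γ) c
  set M := ∑ γ ∈ c.support, ‖c γ‖
  have hM : Tendsto (fun N : ℕ => M * (2 / √N)) atTop (𝓝 0) := by
    simpa using ((Real.tendsto_sqrt_atTop.comp tendsto_natCast_atTop_atTop).const_div_atTop
      (2 : ℝ)).const_mul M
  obtain ⟨N, hMN, hN⟩ :=
    ((hM.eventually (gt_mem_nhds (half_pos hδ))).and (eventually_ge_atTop 1)).exists
  obtain ⟨C, g, hC, hg⟩ := hP.exists_disjoint_smul (F := c.support) (by simpa using hc₁) hN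
  refine ⟨N, hN, g, ?_⟩
  calc ‖conjAvg g X‖ = ‖conjAvg g (X - Y) + conjAvg g Y‖ := by rw [← map_add, sub_add_cancel]
    _ ≤ ‖X - Y‖ + M * (2 / √N) :=
        norm_add_le_of_le (norm_conjAvg_le g _) (norm_conjAvg_linearCombination_lam_le c hC hg)
    _ < δ / 2 + δ / 2 := add_lt_add hXY hMN
    _ = δ := add_halves δ
end
end
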